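/- arXiv:1412.5484 — 7 statements merged into one kernel-verified Lean document; each statement's English description precedes it below -/
import Mathlib

section
/- Let β ≥ 0 and ε₀ be real numbers, and let d : ZMod N → ℤ be a discrepancy function with |{x : d x ≠ 0}| ≥ ε₀·N. If |{x : d x < 0}| ≤ (ε₀/2 − β)·N or |{x : d x > 0}| ≤ (ε₀/2 − β)·N, then |{x : d x + d (−x) ≠ 0}| ≥ 2β·N. -/
/-!
Negation pairs `x` with `-x`. Outside the set where `d x + d (-x) ≠ 0`, a point with `d x > 0` is
paired with a point where `d` is negative and vice versa, so the numbers of points where `d` is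
positive and where it is negative differ by at most the size of that set. If one of them is at most
`(ε₀/2 - β) N` while they add up to at least `ε₀ N`, the other exceeds it by at least `2β N`.
-/

open Finset

section Discrepancy

variable {G α : Type*} [Fintype G] [InvolutiveNeg G]
  [AddCommGroup α] [LinearOrder α] [IsOrderedAddMonoid α] (d : G → α)

theorem card_pos_le_card_add_neg_ne_zero_add_card_neg :
    #{x | 0 < d x} ≤ #{x | d x + d (-x) ≠ 0} + #{x | d x < 0} := by
  classical
  have hpaired :
      #(univ.filter (fun x => 0 < d x) \ univ.filter fun x => d x + d (-x) ≠ 0) ≤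
        #{x | d x < 0} := by
    refine card_le_card_of_injOn (fun x => -x) (fun x hx => ?_) neg_injective.injOn
    simp only [coe_sdiff, coe_filter, mem_univ, true_and, Set.mem_sdiff, Set.mem_ofPred_eq,
      not_not] at hx
    simp only [coe_filter, mem_univ, true_and, Set.mem_ofPred_eq]
    rw [eq_neg_of_add_eq_zero_right hx.2]
    exact neg_neg_of_pos hx.1
  have := card_le_card_sdiff_add_card (s := univ.filter fun x => 0 < d x)
    (t := univ.filter fun x => d x + d (-x) ≠ 0)
  omega

theorem card_neg_le_card_add_neg_ne_zero_add_card_pos :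
    #{x | d x < 0} ≤ #{x | d x + d (-x) ≠ 0} + #{x | 0 < d x} := by
  simpa only [Pi.neg_apply, neg_pos, neg_lt_zero, ← neg_add, ne_eq, neg_eq_zero] using
    card_pos_le_card_add_neg_ne_zero_add_card_neg (-d)

end Discrepancy

theorem card_ne_zero_eq_card_neg_add_card_pos {ι α : Type*} [Fintype ι] [Zero α] [LinearOrder α]
    (d : ι → α) :
    #{x | d x ≠ 0} = #{x | d x < 0} + #{x | 0 < d x} := by
  classical
  rw [← card_union_of_disjoint (disjoint_filter.2 fun x _ h => h.not_gt), ← filter_or]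
  simp only [ne_iff_lt_or_gt]

theorem stmt_0_general (n : ℕ) (β ε₀ : ℝ) (d : ZMod (2 ^ n) → ℤ)
    (herr : ((Finset.univ.filter fun x : ZMod (2 ^ n) => d x ≠ 0).card : ℝ) ≥ ε₀ * 2 ^ n)
    (hside : ((Finset.univ.filter fun x : ZMod (2 ^ n) => d x < 0).card : ℝ) ≤ (ε₀ / 2 - β) * 2 ^ n ∨
             ((Finset.univ.filter fun x : ZMod (2 ^ n) => 0 < d x).card : ℝ) ≤ (ε₀ / 2 - β) * 2 ^ n) :
    ((Finset.univ.filter fun x : ZMod (2 ^ n) => d x + d (-x) ≠ 0).card : ℝ) ≥ 2 * β * 2 ^ n := by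
  have hsplit : (#{x | d x ≠ 0} : ℝ) = #{x | d x < 0} + #{x | 0 < d x} := by
    exact_mod_cast card_ne_zero_eq_card_neg_add_card_pos d
  have hpos : (#{x | 0 < d x} : ℝ) ≤ #{x | d x + d (-x) ≠ 0} + #{x | d x < 0} := by
    exact_mod_cast card_pos_le_card_add_neg_ne_zero_add_card_neg d
  have hneg : (#{x | d x < 0} : ℝ) ≤ #{x | d x + d (-x) ≠ 0} + #{x | 0 < d x} := by
    exact_mod_cast card_neg_le_card_add_neg_ne_zero_add_card_pos d
  rcases hside with h | h <;> linarith

theorem stmt_0 (n : ℕ) (β ε₀ : ℝ) (hβ : 0 ≤ β) (d : ZMod (2 ^ n) → ℤ)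
    (herr : ((Finset.univ.filter fun x : ZMod (2 ^ n) => d x ≠ 0).card : ℝ) ≥ ε₀ * 2 ^ n)
    (hside : ((Finset.univ.filter fun x : ZMod (2 ^ n) => d x < 0).card : ℝ) ≤ (ε₀ / 2 - β) * 2 ^ n ∨
             ((Finset.univ.filter fun x : ZMod (2 ^ n) => 0 < d x).card : ℝ) ≤ (ε₀ / 2 - β) * 2 ^ n) :
    ((Finset.univ.filter fun x : ZMod (2 ^ n) => d x + d (-x) ≠ 0).card : ℝ) ≥ 2 * β * 2 ^ n :=
  stmt_0_general n β ε₀ d herr hside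
end

section
/- Let β ≥ 0 and ε₀ be real numbers, and let d : ZMod N → ℤ be a discrepancy function with |{x : d x ≠ 0}| = ε₀·N. If |{x : d x + d (−x) ≠ 0}| < 2β·N, then (ε₀/2 − β)·N < |{x : d x > 0}| < (ε₀/2 + β)·N and (ε₀/2 − β)·N < |{x : d x < 0}| < (ε₀/2 + β)·N. -/
/-! Split `{d ≠ 0}` into `{d > 0}` and `{d < 0}`. Negation `x ↦ -x` maps `{d > 0}` injectively into
`{d < 0}` except on the set where `d x + d (-x) ≠ 0`, and vice versa, so the two halves differ in size
by less than `2βN`; since they add up to `ε₀N`, each lies within `βN` of `ε₀N / 2`. -/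

namespace Finset

variable {α : Type*} [Fintype α]

theorem card_filter_ne_zero_eq_card_filter_pos_add_card_filter_neg (d : α → ℤ) :
    #{x | d x ≠ 0} = #{x | 0 < d x} + #{x | d x < 0} := by
  classical
  rw [← card_union_of_disjoint (disjoint_filter.2 fun _ _ h => (lt_asymm h).elim), ← filter_or]
  simp only [ne_iff_lt_or_gt, or_comm]

theorem card_filter_pos_le_card_filter_neg_add [InvolutiveNeg α] (d : α → ℤ) :
    #{x | 0 < d x} ≤ #{x | d x < 0} + #{x | d x + d (-x) ≠ 0} := by
  classical
  have hsplit : #{x | 0 < d x} ≤ #{x | d (-x) < 0} + #{x | d x + d (-x) ≠ 0} :=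
    calc #{x | 0 < d x} ≤ #{x | d (-x) < 0 ∨ d x + d (-x) ≠ 0} :=
          card_le_card (monotone_filter_right _ fun x hx => by omega)
      _ ≤ _ := by rw [filter_or]; exact card_union_le _ _
  have hneg : #{x | d (-x) < 0} = #{x | d x < 0} :=
    card_equiv (Equiv.neg α) (by simp)
  omega

theorem card_filter_neg_le_card_filter_pos_add [InvolutiveNeg α] (d : α → ℤ) :
    #{x | d x < 0} ≤ #{x | 0 < d x} + #{x | d x + d (-x) ≠ 0} := by
  simpa only [Left.neg_pos_iff, Left.neg_neg_iff, ← neg_add, neg_ne_zero]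
    using card_filter_pos_le_card_filter_neg_add (fun x => -d x)

end Finset

theorem stmt_1_general (n : ℕ) (β ε₀ : ℝ) (d : ZMod (2 ^ n) → ℤ)
    (herr : ((Finset.univ.filter fun x : ZMod (2 ^ n) => d x ≠ 0).card : ℝ) = ε₀ * 2 ^ n)
    (hpass : ((Finset.univ.filter fun x : ZMod (2 ^ n) => d x + d (-x) ≠ 0).card : ℝ) < 2 * β * 2 ^ n) :
    ((ε₀ / 2 - β) * 2 ^ n < ((Finset.univ.filter fun x : ZMod (2 ^ n) => 0 < d x).card : ℝ) ∧
      ((Finset.univ.filter fun x : ZMod (2 ^ n) => 0 < d x).card : ℝ) < (ε₀ / 2 + β) * 2 ^ n) ∧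
    ((ε₀ / 2 - β) * 2 ^ n < ((Finset.univ.filter fun x : ZMod (2 ^ n) => d x < 0).card : ℝ) ∧
      ((Finset.univ.filter fun x : ZMod (2 ^ n) => d x < 0).card : ℝ) < (ε₀ / 2 + β) * 2 ^ n) := by
  have hpos := Nat.cast_le (α := ℝ) |>.2 (Finset.card_filter_pos_le_card_filter_neg_add d)
  have hneg := Nat.cast_le (α := ℝ) |>.2 (Finset.card_filter_neg_le_card_filter_pos_add d)
  rw [Finset.card_filter_ne_zero_eq_card_filter_pos_add_card_filter_neg] at herr
  push_cast at herr hpos hneg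
  refine ⟨⟨?_, ?_⟩, ?_, ?_⟩ <;> linarith

theorem stmt_1 (n : ℕ) (β ε₀ : ℝ) (hβ : 0 ≤ β) (d : ZMod (2 ^ n) → ℤ)
    (herr : ((Finset.univ.filter fun x : ZMod (2 ^ n) => d x ≠ 0).card : ℝ) = ε₀ * 2 ^ n)
    (hpass : ((Finset.univ.filter fun x : ZMod (2 ^ n) => d x + d (-x) ≠ 0).card : ℝ) < 2 * β * 2 ^ n) :
    ((ε₀ / 2 - β) * 2 ^ n < ((Finset.univ.filter fun x : ZMod (2 ^ n) => 0 < d x).card : ℝ) ∧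
      ((Finset.univ.filter fun x : ZMod (2 ^ n) => 0 < d x).card : ℝ) < (ε₀ / 2 + β) * 2 ^ n) ∧
    ((ε₀ / 2 - β) * 2 ^ n < ((Finset.univ.filter fun x : ZMod (2 ^ n) => d x < 0).card : ℝ) ∧
      ((Finset.univ.filter fun x : ZMod (2 ^ n) => d x < 0).card : ℝ) < (ε₀ / 2 + β) * 2 ^ n) :=
  stmt_1_general n β ε₀ d herr hpass
end

section
/- Let 0 < α < 1 and ε₀ ≥ 0 be real numbers, and let d : ZMod N → ℤ be a discrepancy function with |{x : d x ≠ 0}| ≤ ε₀·N. Call x ∈ ZMod N bad if its number of opposite-sign matches |{y : d y > 0 ∧ d (x − y) < 0}| exceeds (1/α)·(ε₀/2)²·N. Then |{x : x is bad}| ≤ α·N; that is, a uniformly random x is bad with probability at most α. -/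
/-!
Counting pairs, `∑ₓ #{y : d y > 0 ∧ d (x - y) < 0} = #{d > 0} · #{d < 0}`, since for each `y` the
map `x ↦ x - y` is a bijection. By AM-GM this product is at most `(#{d ≠ 0} / 2)² ≤ (ε₀ N / 2)²`,
and Markov's inequality for the counting measure bounds the number of `x` whose count exceeds
`(1/α)(ε₀/2)² N` by `α N`.
-/

open Finset

theorem Finset.card_filter_lt_le_of_sum_le {ι : Type*} [Fintype ι] {f : ι → ℝ}
    (hf : ∀ x, 0 ≤ f x) {t M : ℝ} (ht : 0 ≤ t) (hM : 0 ≤ M) (hsum : ∑ x, f x ≤ M * t) :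
    (#{x | t < f x} : ℝ) ≤ M := by
  have hmarkov : #{x | t < f x} * t ≤ M * t :=
    calc (#{x | t < f x} : ℝ) * t = ∑ _x ∈ {x | t < f x}, t := by
          rw [sum_const, nsmul_eq_mul]
      _ ≤ ∑ x ∈ {x | t < f x}, f x := sum_le_sum fun x hx => (mem_filter.1 hx).2.le
      _ ≤ ∑ x, f x := sum_le_sum_of_subset_of_nonneg (subset_univ _) fun x _ _ => hf x
      _ ≤ M * t := hsum
  rcases ht.eq_or_lt with rfl | ht
  · have hempty : ({x | 0 < f x} : Finset ι) = ∅ := by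
      refine filter_eq_empty_iff.2 fun x _ hx => ?_
      have := single_le_sum (fun y _ => hf y) (mem_univ x)
      linarith
    simpa [hempty] using hM
  · exact le_of_mul_le_mul_right hmarkov ht

theorem Finset.sum_card_filter_and_sub {G : Type*} [AddGroup G] [Fintype G]
    (p q : G → Prop) [DecidablePred p] [DecidablePred q] :
    ∑ x, #{y | p y ∧ q (x - y)} = #{y | p y} * #{y | q y} := by
  have hshift : ∀ y, #{x | q (x - y)} = #{x | q x} := fun y =>
    card_equiv (Equiv.subRight y) fun x => by simp
  calc ∑ x, #{y | p y ∧ q (x - y)} = ∑ y, if p y then #{x | q (x - y)} else 0 := by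
        simp only [card_filter, ite_and]
        rw [sum_comm]
        exact sum_congr rfl fun y _ => by split_ifs <;> simp
    _ = #{y | p y} * #{y | q y} := by
        rw [← sum_filter, sum_congr rfl fun y _ => hshift y, sum_const, smul_eq_mul]

theorem Finset.card_filter_pos_add_card_filter_neg {ι : Type*} [Fintype ι] (d : ι → ℤ) :
    #{x | 0 < d x} + #{x | d x < 0} = #{x | d x ≠ 0} := by
  classical
  rw [← card_union_of_disjoint (disjoint_filter.2 fun x _ h => by omega), ← filter_or]
  congr 1
  exact filter_congr fun x _ => by omega

theorem stmt_4_general (n : ℕ) (α ε₀ : ℝ) (hα : 0 < α)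
    (d : ZMod (2 ^ n) → ℤ)
    (herr : ((Finset.univ.filter fun x : ZMod (2 ^ n) => d x ≠ 0).card : ℝ) ≤ ε₀ * 2 ^ n) :
    ((Finset.univ.filter fun x : ZMod (2 ^ n) =>
        (1 / α) * (ε₀ / 2) ^ 2 * 2 ^ n <
          ((Finset.univ.filter fun y : ZMod (2 ^ n) => 0 < d y ∧ d (x - y) < 0).card : ℝ)).card : ℝ) ≤
      α * 2 ^ n := by
  set pos := #{y | 0 < d y}
  set neg := #{y | d y < 0}
  have hsupp : (pos + neg : ℝ) ≤ ε₀ * 2 ^ n := by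
    rw [← Nat.cast_add, card_filter_pos_add_card_filter_neg]
    exact herr
  have hamgm : 4 * (pos : ℝ) * neg ≤ (ε₀ * 2 ^ n) ^ 2 :=
    (four_mul_le_sq_add _ _).trans (by gcongr)
  refine card_filter_lt_le_of_sum_le (fun x => Nat.cast_nonneg _) (by positivity) (by positivity) ?_
  rw [← Nat.cast_sum, sum_card_filter_and_sub (fun y => 0 < d y) (fun y => d y < 0), Nat.cast_mul]
  calc (pos * neg : ℝ) ≤ (ε₀ * 2 ^ n) ^ 2 / 4 := by linarith
    _ = α * 2 ^ n * (1 / α * (ε₀ / 2) ^ 2 * 2 ^ n) := by field_simp; ring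

theorem stmt_4 (n : ℕ) (α ε₀ : ℝ) (hα : 0 < α) (hα1 : α < 1) (hε₀ : 0 ≤ ε₀)
    (d : ZMod (2 ^ n) → ℤ)
    (herr : ((Finset.univ.filter fun x : ZMod (2 ^ n) => d x ≠ 0).card : ℝ) ≤ ε₀ * 2 ^ n) :
    ((Finset.univ.filter fun x : ZMod (2 ^ n) =>
        (1 / α) * (ε₀ / 2) ^ 2 * 2 ^ n <
          ((Finset.univ.filter fun y : ZMod (2 ^ n) => 0 < d y ∧ d (x - y) < 0).card : ℝ)).card : ℝ) ≤
      α * 2 ^ n :=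
  stmt_4_general n α ε₀ hα d herr
end

section
/- Let α > 0, β ≥ 0, ε₀ be real numbers, let d : ZMod N → ℤ be a discrepancy function, and fix x ∈ ZMod N. Suppose |{y : d y > 0 ∧ d (x − y) < 0}| ≤ (1/α)·(ε₀/2)²·N (x is good), |{y : d y > 0}| ≥ (ε₀/2 − β)·N, and |{y : d y < 0}| ≥ (ε₀/2 − β)·N. Then |{y : d y + d (x − y) ≠ d x}| ≥ (ε₀/2 − β − (1/α)·(ε₀/2)²)·N; that is, the RandSplit test at x fails for at least this many choices of the random splitting point y. -/
/-! If `d x ≤ 0`, every `y` with `d y > 0` either fails the test or has `d (x - y) < 0`, so the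
failures number at least `#{d > 0}` minus the bad pairs counted by `hgood`. If `d x > 0`, the same
holds with the roles of the signs exchanged; the reflection `y ↦ x - y` identifies the bad pairs
`d y < 0 < d (x - y)` with those counted by `hgood`. -/

open Finset

section RandSplit

variable {G : Type*} [AddCommGroup G] [Fintype G]

lemma card_filter_and_sub_comm (p q : G → Prop) [DecidablePred p] [DecidablePred q] (x : G) :
    #{y | p y ∧ q (x - y)} = #{y | q y ∧ p (x - y)} :=
  card_nbij' (x - ·) (x - ·) (by simp +contextual [Set.MapsTo]) (by simp +contextual [Set.MapsTo])
    (fun y _ => sub_sub_cancel x y) (fun y _ => sub_sub_cancel x y)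

variable [DecidableEq G] (d : G → ℤ) (x : G)

lemma card_pos_le_card_split_ne_add (hx : d x ≤ 0) :
    #{y | 0 < d y} ≤ #{y | d y + d (x - y) ≠ d x} + #{y | 0 < d y ∧ d (x - y) < 0} := by
  refine (card_le_card fun y hy => ?_).trans (card_union_le _ _)
  simp only [mem_union, mem_filter, mem_univ, true_and] at hy ⊢
  omega

lemma card_neg_le_card_split_ne_add (hx : 0 < d x) :
    #{y | d y < 0} ≤ #{y | d y + d (x - y) ≠ d x} + #{y | 0 < d y ∧ d (x - y) < 0} := by
  rw [card_filter_and_sub_comm (0 < d ·) (d · < 0)]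
  refine (card_le_card fun y hy => ?_).trans (card_union_le _ _)
  simp only [mem_union, mem_filter, mem_univ, true_and] at hy ⊢
  omega

end RandSplit

theorem stmt_6_general (n : ℕ) (α β ε₀ : ℝ)
    (d : ZMod (2 ^ n) → ℤ) (x : ZMod (2 ^ n))
    (hgood : ((Finset.univ.filter fun y : ZMod (2 ^ n) => 0 < d y ∧ d (x - y) < 0).card : ℝ) ≤
      (1 / α) * (ε₀ / 2) ^ 2 * 2 ^ n)
    (hpos : ((Finset.univ.filter fun y : ZMod (2 ^ n) => 0 < d y).card : ℝ) ≥ (ε₀ / 2 - β) * 2 ^ n)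
    (hneg : ((Finset.univ.filter fun y : ZMod (2 ^ n) => d y < 0).card : ℝ) ≥ (ε₀ / 2 - β) * 2 ^ n) :
    ((Finset.univ.filter fun y : ZMod (2 ^ n) => d y + d (x - y) ≠ d x).card : ℝ) ≥
      (ε₀ / 2 - β - (1 / α) * (ε₀ / 2) ^ 2) * 2 ^ n := by
  rcases le_or_gt (d x) 0 with hx | hx
  · have h : (#{y | 0 < d y} : ℝ) ≤
        #{y | d y + d (x - y) ≠ d x} + #{y | 0 < d y ∧ d (x - y) < 0} := by
      exact_mod_cast card_pos_le_card_split_ne_add d x hx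
    linarith
  · have h : (#{y | d y < 0} : ℝ) ≤
        #{y | d y + d (x - y) ≠ d x} + #{y | 0 < d y ∧ d (x - y) < 0} := by
      exact_mod_cast card_neg_le_card_split_ne_add d x hx
    linarith

theorem stmt_6 (n : ℕ) (α β ε₀ : ℝ) (hα : 0 < α) (hβ : 0 ≤ β)
    (d : ZMod (2 ^ n) → ℤ) (x : ZMod (2 ^ n))
    (hgood : ((Finset.univ.filter fun y : ZMod (2 ^ n) => 0 < d y ∧ d (x - y) < 0).card : ℝ) ≤
      (1 / α) * (ε₀ / 2) ^ 2 * 2 ^ n)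
    (hpos : ((Finset.univ.filter fun y : ZMod (2 ^ n) => 0 < d y).card : ℝ) ≥ (ε₀ / 2 - β) * 2 ^ n)
    (hneg : ((Finset.univ.filter fun y : ZMod (2 ^ n) => d y < 0).card : ℝ) ≥ (ε₀ / 2 - β) * 2 ^ n) :
    ((Finset.univ.filter fun y : ZMod (2 ^ n) => d y + d (x - y) ≠ d x).card : ℝ) ≥
      (ε₀ / 2 - β - (1 / α) * (ε₀ / 2) ^ 2) * 2 ^ n :=
  stmt_6_general n α β ε₀ d x hgood hpos hneg
end

section
/- Let d : ZMod N → ℤ be a discrepancy function, set ε₀ := |{x : d x ≠ 0}| / N, and let 0 < α < 1 and β > 0 be real numbers. Then at least one of the following holds: (i) |{x : d x + d (−x) ≠ 0}| ≥ 2β·N, or (ii) |{(x, y) ∈ ZMod N × ZMod N : d y + d (x − y) ≠ d x}| ≥ (1 − α)·(ε₀/2 − β − (1/α)·(ε₀/2)²)·N². -/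
/-!
Write `N = 2 ^ n`, `P = {d > 0}` and `M = {d < 0}`. A pair `(x, y)` for which the signs of
`(d x, d y, d (x - y))` are `(-, ≥ 0, ≥ 0)` or `(≥ 0, -, -)` fails the split test, and
inclusion–exclusion over the indicator of `M` counts exactly `|M| (N - |M|)` such pairs; the
same holds for `P`. If the first test fails on fewer than `2βN` inputs, then `x ↦ -x` almost
swaps `P` and `M`, so the larger of the two has a size `c` with
`|P ∪ M| / 2 ≤ c ≤ |P ∪ M| / 2 + βN`, and an elementary inequality shows that `c (N - c)`
dominates the bound in (ii).
-/
open Finset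
open scoped Pointwise

theorem card_ne_zero_eq_card_pos_add_card_neg {ι : Type*} [Fintype ι] [DecidableEq ι]
    (d : ι → ℤ) :
    #{x | d x ≠ 0} = #{x | 0 < d x} + #{x | d x < 0} := by
  rw [← card_union_of_disjoint (disjoint_filter.2 fun x _ h => by omega), ← filter_or]
  exact congrArg card (filter_congr fun x _ => by omega)

section Counting

variable {G : Type*} [AddCommGroup G] [Fintype G]

theorem card_neg_mul_le_card_split_failures (d : G → ℤ) :
    (#{x | d x < 0} : ℤ) * (Fintype.card G - #{x | d x < 0}) ≤
      #{p : G × G | d p.2 + d (p.1 - p.2) ≠ d p.1} := by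
  set χ : G → ℤ := fun x => if d x < 0 then 1 else 0
  have sum_χ : ∑ x, χ x = #{x | d x < 0} := by simp [χ]
  have sum_χ_sub_left (x : G) : ∑ y, χ (x - y) = #{x | d x < 0} :=
    ((Equiv.subLeft x).sum_comp χ).trans sum_χ
  have sum_χ_sub_right (y : G) : ∑ x, χ (x - y) = #{x | d x < 0} :=
    ((Equiv.subRight y).sum_comp χ).trans sum_χ
  -- The left side is `χ x (1 - χ y) (1 - χ (x - y)) + (1 - χ x) χ y χ (x - y)`, and the sign
  -- patterns `(-, ≥ 0, ≥ 0)`, `(≥ 0, -, -)` of `(d x, d y, d (x - y))` violate additivity.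
  have pointwise (x y : G) :
      χ x - χ x * χ y - χ x * χ (x - y) + χ y * χ (x - y) ≤
        if d y + d (x - y) ≠ d x then 1 else 0 := by
    simp only [χ]; split_ifs <;> omega
  calc (#{x | d x < 0} : ℤ) * (Fintype.card G - #{x | d x < 0})
      = ∑ x, ∑ y, (χ x - χ x * χ y - χ x * χ (x - y) + χ y * χ (x - y)) := by
        simp only [sum_add_distrib, sum_sub_distrib, ← mul_sum, sum_χ, sum_χ_sub_left, sum_const,
          card_univ, nsmul_eq_mul]
        rw [sum_comm]
        simp only [← sum_mul, sum_χ_sub_right, ← mul_sum, sum_χ]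
        ring
    _ ≤ ∑ x, ∑ y, if d y + d (x - y) ≠ d x then (1 : ℤ) else 0 :=
        sum_le_sum fun x _ => sum_le_sum fun y _ => pointwise x y
    _ = #{p : G × G | d p.2 + d (p.1 - p.2) ≠ d p.1} := by
        rw [← Fintype.sum_prod_type', sum_boole]

theorem card_pos_mul_le_card_split_failures (d : G → ℤ) :
    (#{x | 0 < d x} : ℤ) * (Fintype.card G - #{x | 0 < d x}) ≤
      #{p : G × G | d p.2 + d (p.1 - p.2) ≠ d p.1} := by
  have h := card_neg_mul_le_card_split_failures (fun x => -d x)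
  simp only [neg_lt_zero] at h
  convert h using 3
  exact filter_congr fun p _ => by omega

theorem card_pos_le_card_not_odd_add_card_neg [DecidableEq G] (d : G → ℤ) :
    #{x | 0 < d x} ≤ #{x | d x + d (-x) ≠ 0} + #{x | d x < 0} :=
  calc #{x | 0 < d x}
      ≤ #(({x | d x + d (-x) ≠ 0} : Finset G) ∪ -({x | d x < 0} : Finset G)) :=
        card_le_card fun x => by
          simp only [mem_union, mem_neg', mem_filter, mem_univ, true_and]; omega
    _ ≤ _ := (card_union_le _ _).trans_eq (by rw [card_neg])

theorem card_neg_le_card_not_odd_add_card_pos [DecidableEq G] (d : G → ℤ) :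
    #{x | d x < 0} ≤ #{x | d x + d (-x) ≠ 0} + #{x | 0 < d x} := by
  have h := card_pos_le_card_not_odd_add_card_neg (fun x => -d x)
  simp only [neg_pos, neg_lt_zero, ← neg_add, ne_eq, neg_eq_zero] at h
  exact h

theorem exists_card_split_failures_ge [DecidableEq G] (d : G → ℤ) :
    ∃ c : ℕ, #{x | d x ≠ 0} ≤ 2 * c ∧ c ≤ #{x | d x ≠ 0} ∧
      2 * c ≤ #{x | d x ≠ 0} + #{x | d x + d (-x) ≠ 0} ∧
      (c : ℤ) * (Fintype.card G - c) ≤ #{p : G × G | d p.2 + d (p.1 - p.2) ≠ d p.1} := by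
  have hb := card_ne_zero_eq_card_pos_add_card_neg d
  have hpos := card_pos_le_card_not_odd_add_card_neg d
  have hneg := card_neg_le_card_not_odd_add_card_pos d
  rcases le_total #{x | 0 < d x} #{x | d x < 0} with h | h
  · exact ⟨_, by omega, by omega, by omega, card_neg_mul_le_card_split_failures d⟩
  · exact ⟨_, by omega, by omega, by omega, card_pos_mul_le_card_split_failures d⟩

end Counting

theorem mul_one_sub_lower_bound {e u α β : ℝ} (he : e ≤ 1 / 2) (heu : e ≤ u) (hue : u ≤ 2 * e)
    (huβ : u ≤ e + β) (hα₀ : 0 < α) (hα₁ : α < 1) :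
    (1 - α) * (e - β - 1 / α * e ^ 2) ≤ u * (1 - u) := by
  have interpolant_nonneg : 0 ≤ α * u * (1 - u) - α * (1 - α) * (2 * e - u) + (1 - α) * e ^ 2 := by
    -- the left side is concave in `u`; this is its interpolation between `u = e` and `u = 2 * e`
    have interpolation : α * u * (1 - u) - α * (1 - α) * (2 * e - u) + (1 - α) * e ^ 2 =
        (2 * e - u) * ((α - e) ^ 2 + e * (1 - e)) +
          (u - e) * (2 * α * (1 - 2 * e) + (1 - α) * e) + α * (u - e) * (2 * e - u) := by
      ring
    rw [interpolation]
    have : 0 ≤ e := by linarith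
    have : 0 ≤ 1 - e := by linarith
    have : 0 ≤ 1 - 2 * e := by linarith
    have : 0 ≤ 1 - α := by linarith
    have : 0 ≤ 2 * e - u := by linarith
    have : 0 ≤ u - e := by linarith
    positivity
  have scaled : α * ((1 - α) * (e - β - 1 / α * e ^ 2)) =
      α * (1 - α) * (e - β) - (1 - α) * e ^ 2 := by
    field_simp
  refine le_of_mul_le_mul_left ?_ hα₀
  rw [scaled]
  nlinarith [mul_nonneg (mul_nonneg hα₀.le (by linarith : 0 ≤ 1 - α))
    (by linarith : 0 ≤ β - (u - e))]

theorem mul_sub_lower_bound {N b c t α β : ℝ} (hN : 0 < N) (hbN : b ≤ N) (hbc : b ≤ 2 * c)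
    (hcb : c ≤ b) (hct : 2 * c ≤ b + t) (htβ : t < 2 * β * N) (hα₀ : 0 < α) (hα₁ : α < 1) :
    (1 - α) * (b / N / 2 - β - 1 / α * (b / N / 2) ^ 2) * N ^ 2 ≤ c * (N - c) := by
  have h := mul_one_sub_lower_bound (e := b / N / 2) (u := c / N) (β := β) ?_ ?_ ?_ ?_ hα₀ hα₁
  · calc _ ≤ c / N * (1 - c / N) * N ^ 2 := by gcongr
      _ = c * (N - c) := by field_simp
  all_goals
    field_simp
    linarith

theorem stmt_7_general (n : ℕ) (d : ZMod (2 ^ n) → ℤ) (ε₀ α β : ℝ)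
    (hε₀ : ε₀ = ((Finset.univ.filter fun x : ZMod (2 ^ n) => d x ≠ 0).card : ℝ) / 2 ^ n)
    (hα : 0 < α) (hα1 : α < 1) :
    ((Finset.univ.filter fun x : ZMod (2 ^ n) => d x + d (-x) ≠ 0).card : ℝ) ≥ 2 * β * 2 ^ n ∨
    ((Finset.univ.filter fun p : ZMod (2 ^ n) × ZMod (2 ^ n) =>
        d p.2 + d (p.1 - p.2) ≠ d p.1).card : ℝ) ≥
      (1 - α) * (ε₀ / 2 - β - (1 / α) * (ε₀ / 2) ^ 2) * (2 ^ n) ^ 2 := by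
  rw [or_iff_not_imp_left, not_le, hε₀]
  intro hT
  obtain ⟨c, hbc, hcb, hct, hcF⟩ := exists_card_split_failures_ge d
  have hbN : #{x : ZMod (2 ^ n) | d x ≠ 0} ≤ 2 ^ n := card_le_univ _ |>.trans_eq (ZMod.card _)
  rw [ZMod.card] at hcF
  calc _ ≤ (c : ℝ) * (2 ^ n - c) :=
        mul_sub_lower_bound (by positivity) (by exact_mod_cast hbN) (by exact_mod_cast hbc)
          (by exact_mod_cast hcb) (by exact_mod_cast hct) hT hα hα1
    _ ≤ _ := by exact_mod_cast hcF

theorem stmt_7 (n : ℕ) (d : ZMod (2 ^ n) → ℤ) (ε₀ α β : ℝ)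
    (hε₀ : ε₀ = ((Finset.univ.filter fun x : ZMod (2 ^ n) => d x ≠ 0).card : ℝ) / 2 ^ n)
    (hα : 0 < α) (hα1 : α < 1) (hβ : 0 < β) :
    ((Finset.univ.filter fun x : ZMod (2 ^ n) => d x + d (-x) ≠ 0).card : ℝ) ≥ 2 * β * 2 ^ n ∨
    ((Finset.univ.filter fun p : ZMod (2 ^ n) × ZMod (2 ^ n) =>
        d p.2 + d (p.1 - p.2) ≠ d p.1).card : ℝ) ≥
      (1 - α) * (ε₀ / 2 - β - (1 / α) * (ε₀ / 2) ^ 2) * (2 ^ n) ^ 2 :=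
  stmt_7_general n d ε₀ α β hε₀ hα hα1
end

section
/- Let d : ZMod N → ℤ be a discrepancy function with |{x : d x ≠ 0}| ≥ N/8, i.e. P errs on at least 1/8 of the inputs. Define p₁ := |{x : d x + d (−x) ≠ 0}| / N and p₂ := |{(x, y) ∈ ZMod N × ZMod N : d y + d (x − y) ≠ d x}| / N². Then (1 − p₁)^96 · (1 − p₂)^709 ≤ 1/4. (Hence the self-testing algorithm, which runs the first test k₁ = 96 times and the RandSplit test k₂ = 709 times on independent uniform random choices, passes with probability at most 1/4, i.e. returns FAIL with probability at least 3/4.) -/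
/-!
Blum–Luby–Rubinfeld self-correction. Let `K` count the pairs failing the split test on a group
of order `N`. If `8 K < N²`, then for each `x` the sums `d y + d (x - y)` take one value `g x`
for all but `2K/N` of the `y`; a `y` avoiding four such exceptional sets shows
`g x₁ + g x₂ = g (x₁ + x₂) + g 0`, so `g - g 0` is a homomorphism from a finite group to `ℤ`,
hence zero, and `g` is a constant `c`. Then `d x ≠ c` for at most `3K/N` inputs. If `c = 0`
this gives `N/8 ≤ 3K/N`; if `c ≠ 0`, almost every pair is a defect since `c + c ≠ c`. Either way
`p₂ ≥ 1/24`, and `(23/24)^709 ≤ 1/4`.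
-/

open Finset

theorem card_filter_comp_equiv {α β : Type*} [Fintype α] [Fintype β] (e : α ≃ β)
    (p : β → Prop) [DecidablePred p] : #{a | p (e a)} = #{b | p b} := by
  simp only [card_filter]
  exact e.sum_comp fun b => if p b then 1 else 0

theorem card_filter_prod_eq_sum {α β : Type*} [Fintype α] [Fintype β] (p : α × β → Prop)
    [DecidablePred p] : #{q | p q} = ∑ a, #{b | p (a, b)} := by
  simp only [card_filter]
  exact Fintype.sum_prod_type _

theorem AddMonoidHom.eq_zero_of_finite {G M : Type*} [AddGroup G] [Finite G] [AddMonoid M]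
    [IsAddTorsionFree M] (φ : G →+ M) : φ = 0 := by
  ext x
  refine (nsmul_eq_zero_iff_right (Nat.card_pos (α := G)).ne').1 ?_
  rw [← map_nsmul, card_nsmul_eq_zero', map_zero]

section SplitDefects

variable {G : Type*} [AddCommGroup G] [Fintype G] (d : G → ℤ)

def splitDefects : Finset (G × G) := {p | d p.2 + d (p.1 - p.2) ≠ d p.1}

def splitMismatches (x : G) (c : ℤ) : Finset G := {y | d y + d (x - y) ≠ c}

local notation "N" => Fintype.card G
local notation "K" => #(splitDefects d)

theorem card_splitDefects_eq_sum : K = ∑ x, #(splitMismatches d x (d x)) :=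
  card_filter_prod_eq_sum _

theorem exists_card_mul_card_splitMismatches_le (x : G) :
    ∃ c, N * #(splitMismatches d x c) ≤ 2 * K := by
  classical
  let shift : G × G ≃ G × G :=
    { toFun := fun q => (x - q.2, q.1 - q.2)
      invFun := fun q => (q.2 - q.1 + x, x - q.1)
      left_inv := fun q => by ext <;> dsimp <;> abel
      right_inv := fun q => by ext <;> dsimp <;> abel }
  -- a mismatch between `y` and `z` is a defect at `(y, z)` or at `(x - z, y - z)`
  have hpairs : #{q : G × G | d q.1 + d (x - q.1) ≠ d q.2 + d (x - q.2)} ≤ 2 * K :=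
    calc _ ≤ #(splitDefects d ∪ ({q | shift q ∈ splitDefects d} : Finset _)) := by
          refine card_le_card fun q hq => ?_
          simp only [splitDefects, shift, Equiv.coe_fn_mk, mem_union, mem_filter, mem_univ,
            true_and, sub_sub_sub_cancel_right] at hq ⊢
          omega
      _ ≤ K + #({q | shift q ∈ splitDefects d} : Finset _) := card_union_le _ _
      _ = 2 * K := by
          rw [card_filter_comp_equiv shift (· ∈ splitDefects d), filter_univ_mem, two_mul]
  have hsum : ∑ y, N * #{z | d y + d (x - y) ≠ d z + d (x - z)} ≤ ∑ _y : G, 2 * K := by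
    rw [← mul_sum, ← card_filter_prod_eq_sum fun q : G × G =>
      d q.1 + d (x - q.1) ≠ d q.2 + d (x - q.2), sum_const, card_univ, smul_eq_mul]
    exact Nat.mul_le_mul_left _ hpairs
  obtain ⟨y, -, hy⟩ := exists_le_of_sum_le univ_nonempty hsum
  refine ⟨d y + d (x - y), ?_⟩
  simpa only [splitMismatches, ne_comm] using hy

omit [Fintype G] in
theorem eq_apply_zero_of_add_eq_add_apply_zero [Finite G] (g : G → ℤ)
    (h : ∀ x₁ x₂, g x₁ + g x₂ = g (x₁ + x₂) + g 0) (x : G) : g x = g 0 := by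
  let φ : G →+ ℤ := AddMonoidHom.mk' (fun x => g x - g 0) fun a b => by linarith [h a b]
  have hφ : φ x = 0 := by rw [φ.eq_zero_of_finite, AddMonoidHom.zero_apply]
  simpa [φ, sub_eq_zero] using hφ

theorem add_eq_add_apply_zero_of_card_splitMismatches_le (g : G → ℤ)
    (hg : ∀ x, N * #(splitMismatches d x (g x)) ≤ 2 * K) (hK : 8 * K < N ^ 2) (x₁ x₂ : G) :
    g x₁ + g x₂ = g (x₁ + x₂) + g 0 := by
  classical
  let M x := splitMismatches d x (g x)
  have hM₂ : #{y | -y ∈ M x₂} = #(M x₂) :=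
    (card_filter_comp_equiv (Equiv.neg G) (· ∈ M x₂)).trans (by rw [filter_univ_mem])
  have hM₃ : #{y | x₁ - y ∈ M (x₁ + x₂)} = #(M (x₁ + x₂)) :=
    (card_filter_comp_equiv (Equiv.subLeft x₁) (· ∈ M (x₁ + x₂))).trans
      (by rw [filter_univ_mem])
  let bad :=
    M x₁ ∪ ({y | -y ∈ M x₂} : Finset G) ∪ ({y | x₁ - y ∈ M (x₁ + x₂)} : Finset G) ∪ M 0
  have hbad : N * #bad < N * N :=
    calc N * #bad ≤ N * (#(M x₁) + #(M x₂) + #(M (x₁ + x₂)) + #(M 0)) := by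
          grw [card_union_le, card_union_le, card_union_le, hM₂, hM₃]
      _ ≤ 8 * K := by linarith [hg x₁, hg x₂, hg (x₁ + x₂), hg 0]
      _ < N * N := by rwa [← sq]
  obtain ⟨y, -, hy⟩ := exists_mem_notMem_of_card_lt_card (s := bad) (t := univ)
    (by rw [card_univ]; exact Nat.lt_of_mul_lt_mul_left hbad)
  simp only [bad, M, splitMismatches, mem_union, mem_filter, mem_univ, true_and, not_or,
    not_not] at hy
  obtain ⟨⟨⟨h₁, h₂⟩, h₃⟩, h₄⟩ := hy
  rw [sub_neg_eq_add] at h₂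
  rw [show x₁ + x₂ - (x₁ - y) = x₂ + y by abel] at h₃
  rw [zero_sub] at h₄
  linarith

theorem card_ne_mul_card_le_three_mul (c : ℤ)
    (hc : ∀ x, N * #(splitMismatches d x c) ≤ 2 * K) :
    #{x | d x ≠ c} * N ≤ 3 * K := by
  classical
  have hx : ∀ x ∈ ({x | d x ≠ c} : Finset G),
      N * N ≤ N * #(splitMismatches d x (d x)) + 2 * K := by
    intro x hx
    have hcover : N ≤ #(splitMismatches d x (d x)) + #(splitMismatches d x c) :=
      calc N = #(univ : Finset G) := card_univ.symm
        _ ≤ #(splitMismatches d x (d x) ∪ splitMismatches d x c) := by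
            refine card_le_card fun y _ => ?_
            simp only [mem_filter, mem_univ, true_and] at hx
            simp only [splitMismatches, mem_union, mem_filter, mem_univ, true_and]
            omega
        _ ≤ _ := card_union_le _ _
    nlinarith [hc x]
  have hsum : #{x | d x ≠ c} * N * N ≤ 3 * K * N :=
    calc #{x | d x ≠ c} * N * N = ∑ x ∈ {x | d x ≠ c}, N * N := by
          rw [sum_const, smul_eq_mul, mul_assoc]
      _ ≤ ∑ x ∈ {x | d x ≠ c}, (N * #(splitMismatches d x (d x)) + 2 * K) := sum_le_sum hx
      _ = N * ∑ x ∈ {x | d x ≠ c}, #(splitMismatches d x (d x)) +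
            #{x | d x ≠ c} * (2 * K) := by
          rw [sum_add_distrib, mul_sum, sum_const, smul_eq_mul]
      _ ≤ N * K + N * (2 * K) := by
          gcongr
          · rw [card_splitDefects_eq_sum]
            exact sum_le_sum_of_subset (subset_univ _)
          · exact card_le_univ _
      _ = 3 * K * N := by ring
  exact Nat.le_of_mul_le_mul_right hsum Fintype.card_pos

theorem card_sq_le_of_ne_zero (c : ℤ) (hc : c ≠ 0) :
    N ^ 2 ≤ 3 * (#{x | d x ≠ c} * N) + K := by
  classical
  have hx : ∀ x, N ≤ 2 * #{x | d x ≠ c} + #(splitMismatches d x (d x)) +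
      if d x ≠ c then N else 0 := by
    intro x
    split_ifs with hdx
    · exact le_add_self
    calc N = #(univ : Finset G) := card_univ.symm
      _ ≤ #(({y | d y ≠ c} : Finset G) ∪ ({y | d (x - y) ≠ c} : Finset G) ∪
            splitMismatches d x (d x)) := by
          refine card_le_card fun y _ => ?_
          simp only [splitMismatches, mem_union, mem_filter, mem_univ, true_and]
          omega
      _ ≤ #{y | d y ≠ c} + #{y | d (x - y) ≠ c} + #(splitMismatches d x (d x)) := by
          grw [card_union_le, card_union_le]
      _ = 2 * #{x | d x ≠ c} + #(splitMismatches d x (d x)) + 0 := by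
          have : #{y | d (x - y) ≠ c} = #{y | d y ≠ c} :=
            card_filter_comp_equiv (Equiv.subLeft x) (d · ≠ c)
          rw [this]
          ring
  calc N ^ 2 = ∑ _x : G, N := by rw [sum_const, card_univ, smul_eq_mul, sq]
    _ ≤ ∑ x, (2 * #{x | d x ≠ c} + #(splitMismatches d x (d x)) +
          if d x ≠ c then N else 0) := sum_le_sum fun x _ => hx x
    _ = 3 * (#{x | d x ≠ c} * N) + K := by
          rw [sum_add_distrib, sum_add_distrib, ← sum_filter, sum_const, sum_const, card_univ,
            ← card_splitDefects_eq_sum, smul_eq_mul, smul_eq_mul]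
          ring

theorem card_sq_le_card_splitDefects (hd : N ≤ 8 * #{x | d x ≠ 0}) : N ^ 2 ≤ 24 * K := by
  rcases le_or_gt (N ^ 2) (8 * K) with h | h
  · omega
  choose g hg using exists_card_mul_card_splitMismatches_le d
  have hconst := eq_apply_zero_of_add_eq_add_apply_zero g
    (add_eq_add_apply_zero_of_card_splitMismatches_le d g hg h)
  have hE := card_ne_mul_card_le_three_mul d (g 0) fun x => hconst x ▸ hg x
  by_cases h0 : g 0 = 0
  · rw [h0] at hE
    nlinarith
  · have := card_sq_le_of_ne_zero d (g 0) h0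
    omega

end SplitDefects

theorem one_sub_pow_mul_one_sub_pow_le {p q : ℝ} (k : ℕ) {m : ℕ} (hp₀ : 0 ≤ p) (hp₁ : p ≤ 1)
    (hq₀ : 1 / 24 ≤ q) (hq₁ : q ≤ 1) (hm : 35 ≤ m) : (1 - p) ^ k * (1 - q) ^ m ≤ 1 / 4 := by
  have hp : (1 - p) ^ k ≤ 1 := pow_le_one₀ (by linarith) (by linarith)
  have hq : (1 - q) ^ m ≤ (23 / 24) ^ 35 :=
    calc (1 - q) ^ m ≤ (1 - q) ^ 35 := pow_le_pow_of_le_one (by linarith) (by linarith) hm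
      _ ≤ (23 / 24) ^ 35 := pow_le_pow_left₀ (by linarith) (by linarith) _
  calc (1 - p) ^ k * (1 - q) ^ m ≤ 1 * (23 / 24) ^ 35 :=
        mul_le_mul hp hq (pow_nonneg (by linarith) _) zero_le_one
    _ ≤ 1 / 4 := by norm_num

theorem stmt_8 (n : ℕ) (d : ZMod (2 ^ n) → ℤ)
    (herr : ((Finset.univ.filter fun x : ZMod (2 ^ n) => d x ≠ 0).card : ℝ) ≥ 2 ^ n / 8) :
    (1 - ((Finset.univ.filter fun x : ZMod (2 ^ n) => d x + d (-x) ≠ 0).card : ℝ) / 2 ^ n) ^ 96 *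
      (1 - ((Finset.univ.filter fun p : ZMod (2 ^ n) × ZMod (2 ^ n) =>
          d p.2 + d (p.1 - p.2) ≠ d p.1).card : ℝ) / (2 ^ n) ^ 2) ^ 709 ≤ 1 / 4 := by
  have hN : Fintype.card (ZMod (2 ^ n)) = 2 ^ n := ZMod.card _
  have hd : Fintype.card (ZMod (2 ^ n)) ≤ 8 * #{x | d x ≠ 0} := by
    rw [hN]
    exact_mod_cast (by linarith : ((2 : ℝ) ^ n) ≤ 8 * #{x | d x ≠ 0})
  have hkey := card_sq_le_card_splitDefects d hd
  rw [hN, splitDefects] at hkey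
  apply one_sub_pow_mul_one_sub_pow_le 96 (by positivity) _ _ _ (by norm_num)
  · rw [div_le_one (by positivity)]
    exact_mod_cast hN ▸ card_le_univ _
  · rw [le_div_iff₀ (by positivity)]
    have : ((2 : ℝ) ^ n) ^ 2 ≤
        24 * #{p : ZMod (2 ^ n) × ZMod (2 ^ n) | d p.2 + d (p.1 - p.2) ≠ d p.1} := by
      exact_mod_cast hkey
    linarith
  · rw [div_le_one (by positivity)]
    exact_mod_cast (card_le_univ _).trans_eq (by rw [Fintype.card_prod, hN, sq])
end

section
/- Let d : ZMod N → ℤ be a discrepancy function with |{x : d x ≠ 0}| ≤ N/8 (P is 1/8-close to the correct function), and let a ∈ ZMod N satisfy d a ≠ 0 (P is wrong at the checked input a). Then |{x : d x + d (a − x) ≠ d a}| ≥ (3/4)·N; that is, the RandSplit test at a fails for at least 3/4 of the uniformly random splitting points x. -/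
/-!
If `d x + d (a - x) = d a` with `d a ≠ 0`, then `x` or `a - x` lies in the support of `d`.
Since `x ↦ a - x` is a bijection, at most twice the support size (`≤ N/4`) of the splitting
points pass the test, so at least `3N/4` fail.
-/

open Finset

section

variable {G M : Type*} [AddCommGroup G] [Fintype G] [AddZeroClass M] [DecidableEq M]

theorem card_filter_sub_left_ne_zero (d : G → M) (a : G) :
    #{x | d (a - x) ≠ 0} = #{x | d x ≠ 0} :=
  card_equiv (Equiv.subLeft a) fun x => by simp

theorem filter_add_sub_eq_subset [DecidableEq G] {d : G → M} {a : G} (ha : d a ≠ 0) :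
    ({x | d x + d (a - x) = d a} : Finset G) ⊆
      ({x | d x ≠ 0} : Finset G) ∪ ({x | d (a - x) ≠ 0} : Finset G) := by
  intro x hx
  simp only [mem_filter, mem_univ, true_and, mem_union] at hx ⊢
  by_contra! h
  rw [h.1, h.2, add_zero] at hx
  exact ha hx.symm

theorem card_filter_add_sub_eq_le {d : G → M} {a : G} (ha : d a ≠ 0) :
    #{x | d x + d (a - x) = d a} ≤ 2 * #{x | d x ≠ 0} := by
  classical
  calc #{x | d x + d (a - x) = d a}
      _ ≤ #(({x | d x ≠ 0} : Finset G) ∪ ({x | d (a - x) ≠ 0} : Finset G)) :=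
        card_le_card (filter_add_sub_eq_subset ha)
      _ ≤ #{x | d x ≠ 0} + #{x | d (a - x) ≠ 0} := card_union_le _ _
      _ = 2 * #{x | d x ≠ 0} := by rw [card_filter_sub_left_ne_zero, two_mul]

end

theorem stmt_10 (n : ℕ) (d : ZMod (2 ^ n) → ℤ)
    (hclose : ((Finset.univ.filter fun x : ZMod (2 ^ n) => d x ≠ 0).card : ℝ) ≤ 2 ^ n / 8)
    (a : ZMod (2 ^ n)) (ha : d a ≠ 0) :
    ((Finset.univ.filter fun x : ZMod (2 ^ n) => d x + d (a - x) ≠ d a).card : ℝ) ≥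
      (3 / 4) * 2 ^ n := by
  have : NeZero (2 ^ n) := ⟨pow_ne_zero n two_ne_zero⟩
  have hpass : (#{x | d x + d (a - x) = d a} : ℝ) ≤ 2 * #{x | d x ≠ 0} := by
    exact_mod_cast card_filter_add_sub_eq_le ha
  have htotal : (#{x | d x + d (a - x) = d a} + #{x | d x + d (a - x) ≠ d a} : ℝ) = 2 ^ n := by
    exact_mod_cast (card_filter_add_card_filter_not _).trans (ZMod.card _)
  linarith
end
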